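/- Assume the N-player Riccati system has a solution (P_1, …, P_N) on [0, T]. Then, viewing P_1(t) as an N×N array of n×n blocks, there exist matrix-valued functions Π_1, Π_2, Π_3, Π_4 : [0,T] → ℝ^{n×n} with Π_1(t), Π_3(t), Π_4(t) symmetric for every t, such that for all t ∈ [0,T]: the (1,1) block of P_1(t) equals Π_1(t); the (1,j) block equals Π_2(t) for every j ≥ 2; the (j,1) block equals Π_2(t)ᵀ for every j ≥ 2; the (j,j) block equals Π_3(t) for every j ≥ 2; and the (j,k) block equals Π_4(t) for all j ≠ k with 2 ≤ j, k ≤ N. -/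

import Mathlib

/-!
Transposing a solution (`Q`, `Q_f`, `R` being symmetric), or relabelling the players by a
permutation `σ` (taking for `P'_i` the matrix `P_{σ i}` with its blocks permuted by `σ`), gives
again a solution of the same terminal value problem, because `Â`, the matrices `S_k = B_k R⁻¹ B_kᵀ` and the `Q_i` transform accordingly.
The Riccati vector field is polynomial, hence locally Lipschitz, so the solution is unique:
`P_1(t)` is symmetric and invariant under every relabelling that fixes player `1`. These
relabellings move a pair of players `(j, k)` to any other pair with the same pattern of
equalities among `1, j, k`, which forces the four-block form.
-/

open Matrix

/-- `Â = I_N ⊗ A + (1/N)(𝟙_{N×N} ⊗ G)`, written entrywise. -/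
noncomputable def hatA (n N : ℕ) (A G : Matrix (Fin n) (Fin n) ℝ) :
    Matrix (Fin N × Fin n) (Fin N × Fin n) ℝ :=
  Matrix.of fun p q => (if p.1 = q.1 then A p.2 q.2 else 0) + (1 / (N : ℝ)) * G p.2 q.2

/-- `B_k = e_k ⊗ B`. -/
noncomputable def Bblk (n n1 N : ℕ) (B : Matrix (Fin n) (Fin n1) ℝ) (k : Fin N) :
    Matrix (Fin N × Fin n) (Fin n1) ℝ :=
  Matrix.of fun p c => if p.1 = k then B p.2 c else 0

/-- `K_i = [0,…,0, I_n, 0,…,0] − (1/N)[Γ, …, Γ]` with `I_n` in the `i`-th block. -/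
noncomputable def Kblk (n N : ℕ) (Γ : Matrix (Fin n) (Fin n) ℝ) (i : Fin N) :
    Matrix (Fin n) (Fin N × Fin n) ℝ :=
  Matrix.of fun r q => (if q.1 = i ∧ r = q.2 then (1 : ℝ) else 0) - (1 / (N : ℝ)) * Γ r q.2

/-- `Q_i = K_iᵀ Q K_i` (and `Q_{if} = K_{if}ᵀ Q_f K_{if}` with `Γ_f, Q_f`). -/
noncomputable def Qblk (n N : ℕ) (Q Γ : Matrix (Fin n) (Fin n) ℝ) (i : Fin N) :
    Matrix (Fin N × Fin n) (Fin N × Fin n) ℝ :=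
  (Kblk n N Γ i)ᵀ * Q * Kblk n N Γ i

/-- Right-hand side of the `N`-player Riccati system:
`−(P_i Â + Âᵀ P_i) + P_i Σ_k B_k R⁻¹ B_kᵀ P_k + Σ_k P_k B_k R⁻¹ B_kᵀ P_i
  − P_i B_i R⁻¹ B_iᵀ P_i − Q_i`. -/
noncomputable def riccatiRHS (n n1 N : ℕ) (A G Q Γ : Matrix (Fin n) (Fin n) ℝ)
    (B : Matrix (Fin n) (Fin n1) ℝ) (R : Matrix (Fin n1) (Fin n1) ℝ)
    (P : Fin N → Matrix (Fin N × Fin n) (Fin N × Fin n) ℝ) (i : Fin N) :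
    Matrix (Fin N × Fin n) (Fin N × Fin n) ℝ :=
  -(P i * hatA n N A G + (hatA n N A G)ᵀ * P i)
    + P i * (∑ k, Bblk n n1 N B k * R⁻¹ * (Bblk n n1 N B k)ᵀ * P k)
    + (∑ k, P k * Bblk n n1 N B k * R⁻¹ * (Bblk n n1 N B k)ᵀ) * P i
    - P i * Bblk n n1 N B i * R⁻¹ * (Bblk n n1 N B i)ᵀ * P i
    - Qblk n N Q Γ i

/-- `(P_1, …, P_N)` solves the `N`-player Riccati terminal value problem on `[τ, T]`:
each `P_i` is differentiable on `[τ,T]` with derivative given by the Riccati right-hand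
side (entrywise), and `P_i(T) = Q_{if}`. -/
def IsRiccatiSol (n n1 N : ℕ) (A G Q Qf Γ Γf : Matrix (Fin n) (Fin n) ℝ)
    (B : Matrix (Fin n) (Fin n1) ℝ) (R : Matrix (Fin n1) (Fin n1) ℝ) (τ T : ℝ)
    (P : Fin N → ℝ → Matrix (Fin N × Fin n) (Fin N × Fin n) ℝ) : Prop :=
  (∀ i, ∀ t ∈ Set.Icc τ T, ∀ p q,
      HasDerivWithinAt (fun s => P i s p q)
        (riccatiRHS n n1 N A G Q Γ B R (fun k => P k t) i p q) (Set.Icc τ T) t)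
  ∧ ∀ i, P i T = Qblk n N Qf Γf i

attribute [local instance] Matrix.normedAddCommGroup Matrix.normedSpace

open Set

theorem ODE_solution_unique_of_contDiff_of_mem_Icc_left {E : Type*} [NormedAddCommGroup E]
    [NormedSpace ℝ E] [FiniteDimensional ℝ E] {v : E → E} (hv : ContDiff ℝ 1 v)
    {f g : ℝ → E} {a b : ℝ}
    (hf : ∀ t ∈ Icc a b, HasDerivWithinAt f (v (f t)) (Icc a b) t)
    (hg : ∀ t ∈ Icc a b, HasDerivWithinAt g (v (g t)) (Icc a b) t)
    (hb : f b = g b) : EqOn f g (Icc a b) := by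
  have hfc : ContinuousOn f (Icc a b) := fun t ht => (hf t ht).continuousWithinAt
  have hgc : ContinuousOn g (Icc a b) := fun t ht => (hg t ht).continuousWithinAt
  obtain ⟨ρ, hρ⟩ := ((isCompact_Icc.image_of_continuousOn hfc).union
    (isCompact_Icc.image_of_continuousOn hgc)).isBounded.subset_closedBall 0
  obtain ⟨K, hK⟩ := hv.contDiffOn.exists_lipschitzOnWith one_ne_zero
    (convex_closedBall 0 ρ) (isCompact_closedBall 0 ρ)
  refine ODE_solution_unique_of_mem_Icc_left (v := fun _ => v) (s := fun _ => Metric.closedBall 0 ρ)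
    (fun _ _ => hK) hfc (fun t ht => ?_) (fun t ht => ?_) hgc (fun t ht => ?_) (fun t ht => ?_) hb
  · exact (hf t (Ioc_subset_Icc_self ht)).mono_of_mem_nhdsWithin (Icc_mem_nhdsLE_of_mem ht)
  · exact hρ (Or.inl (mem_image_of_mem f (Ioc_subset_Icc_self ht)))
  · exact (hg t (Ioc_subset_Icc_self ht)).mono_of_mem_nhdsWithin (Icc_mem_nhdsLE_of_mem ht)
  · exact hρ (Or.inr (mem_image_of_mem g (Ioc_subset_Icc_self ht)))

@[fun_prop]
theorem ContDiff.matrix_mul {𝕜 R : Type*} [NontriviallyNormedField 𝕜] [NormedRing R]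
    [NormedAlgebra 𝕜 R] {F : Type*} [NormedAddCommGroup F] [NormedSpace 𝕜 F]
    {l m p : Type*} [Fintype l] [Fintype m] [Fintype p] {k : WithTop ℕ∞}
    {f : F → Matrix l m R} {g : F → Matrix m p R} (hf : ContDiff 𝕜 k f) (hg : ContDiff 𝕜 k g) :
    ContDiff 𝕜 k fun x => f x * g x := by
  refine contDiff_pi.2 fun a => contDiff_pi.2 fun c => ?_
  simp only [Matrix.mul_apply]
  exact ContDiff.sum fun b _ =>
    (contDiff_pi.1 (contDiff_pi.1 hf a) b).mul (contDiff_pi.1 (contDiff_pi.1 hg b) c)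

theorem Equiv.Perm.exists_fixing_map_pair {α : Type*} [DecidableEq α] {c a b a' b' : α}
    (ha : a = c ↔ a' = c) (hb : b = c ↔ b' = c) (hab : a = b ↔ a' = b') :
    ∃ σ : Equiv.Perm α, σ c = c ∧ σ a = a' ∧ σ b = b' := by
  have swap_fix : ∀ {x y z : α}, (x = z ↔ y = z) → Equiv.swap x y z = z := by
    intro x y z h
    rw [Equiv.swap_apply_def]
    grind
  refine ⟨Equiv.swap (Equiv.swap a a' b) b' * Equiv.swap a a', ?_, ?_, ?_⟩
  all_goals simp only [Equiv.Perm.mul_apply]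
  · rw [swap_fix ha, swap_fix]
    grind
  · rw [Equiv.swap_apply_left, swap_fix]
    grind
  · rw [Equiv.swap_apply_left]

section Riccati

variable {n n1 N : ℕ} {A G Q Qf Γ Γf : Matrix (Fin n) (Fin n) ℝ}
  {B : Matrix (Fin n) (Fin n1) ℝ} {R : Matrix (Fin n1) (Fin n1) ℝ}

theorem contDiff_riccatiRHS :
    ContDiff ℝ 1 fun P : Fin N → Matrix (Fin N × Fin n) (Fin N × Fin n) ℝ =>
      fun i => riccatiRHS n n1 N A G Q Γ B R P i := by
  unfold riccatiRHS
  fun_prop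

noncomputable def Sblk (n n1 N : ℕ) (B : Matrix (Fin n) (Fin n1) ℝ)
    (R : Matrix (Fin n1) (Fin n1) ℝ) (k : Fin N) : Matrix (Fin N × Fin n) (Fin N × Fin n) ℝ :=
  Bblk n n1 N B k * R⁻¹ * (Bblk n n1 N B k)ᵀ

theorem riccatiRHS_eq (P : Fin N → Matrix (Fin N × Fin n) (Fin N × Fin n) ℝ) (i : Fin N) :
    riccatiRHS n n1 N A G Q Γ B R P i =
      -(P i * hatA n N A G + (hatA n N A G)ᵀ * P i)
        + P i * ∑ k, Sblk n n1 N B R k * P k + (∑ k, P k * Sblk n n1 N B R k) * P i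
        - P i * Sblk n n1 N B R i * P i - Qblk n N Q Γ i := by
  simp only [riccatiRHS, Sblk, Matrix.mul_assoc]

theorem Sblk_transpose (hR : R.IsSymm) (k : Fin N) : (Sblk n n1 N B R k)ᵀ = Sblk n n1 N B R k := by
  simp [Sblk, Matrix.transpose_mul, Matrix.transpose_nonsing_inv, hR.eq, Matrix.mul_assoc]

theorem Qblk_transpose (hQ : Q.IsSymm) (i : Fin N) : (Qblk n N Q Γ i)ᵀ = Qblk n N Q Γ i := by
  simp [Qblk, Matrix.transpose_mul, hQ.eq, Matrix.mul_assoc]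

theorem riccatiRHS_transpose (hQ : Q.IsSymm) (hR : R.IsSymm)
    (P : Fin N → Matrix (Fin N × Fin n) (Fin N × Fin n) ℝ) (i : Fin N) :
    riccatiRHS n n1 N A G Q Γ B R (fun k => (P k)ᵀ) i = (riccatiRHS n n1 N A G Q Γ B R P i)ᵀ := by
  simp only [riccatiRHS_eq, Matrix.transpose_add, Matrix.transpose_sub, Matrix.transpose_neg,
    Matrix.transpose_mul, Matrix.transpose_sum, Matrix.transpose_transpose, Sblk_transpose hR,
    Qblk_transpose hQ, Matrix.mul_assoc, Finset.mul_sum, Finset.sum_mul]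
  abel

noncomputable def relabelPlayers (n : ℕ) (σ : Equiv.Perm (Fin N)) :
    Matrix (Fin N × Fin n) (Fin N × Fin n) ℝ ≃+* Matrix (Fin N × Fin n) (Fin N × Fin n) ℝ :=
  Matrix.reindexRingEquiv ℝ (σ.prodCongr (Equiv.refl (Fin n))).symm

@[simp]
theorem relabelPlayers_apply (σ : Equiv.Perm (Fin N))
    (M : Matrix (Fin N × Fin n) (Fin N × Fin n) ℝ) (p q : Fin N × Fin n) :
    relabelPlayers n σ M p q = M (σ p.1, p.2) (σ q.1, q.2) :=
  rfl

theorem relabelPlayers_hatA (σ : Equiv.Perm (Fin N)) :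
    relabelPlayers n σ (hatA n N A G) = hatA n N A G := by
  ext p q
  simp [hatA]

theorem relabelPlayers_hatA_transpose (σ : Equiv.Perm (Fin N)) :
    relabelPlayers n σ (hatA n N A G)ᵀ = (hatA n N A G)ᵀ := by
  ext p q
  simp [hatA]

theorem relabelPlayers_Sblk (σ : Equiv.Perm (Fin N)) (k : Fin N) :
    relabelPlayers n σ (Sblk n n1 N B R (σ k)) = Sblk n n1 N B R k := by
  ext p q
  simp [Sblk, Bblk, Matrix.mul_apply]

theorem relabelPlayers_Qblk (σ : Equiv.Perm (Fin N)) (i : Fin N) :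
    relabelPlayers n σ (Qblk n N Q Γ (σ i)) = Qblk n N Q Γ i := by
  ext p q
  simp [Qblk, Kblk, Matrix.mul_apply]

theorem riccatiRHS_relabel (σ : Equiv.Perm (Fin N))
    (P : Fin N → Matrix (Fin N × Fin n) (Fin N × Fin n) ℝ) (i : Fin N) :
    riccatiRHS n n1 N A G Q Γ B R (fun k => relabelPlayers n σ (P (σ k))) i
      = relabelPlayers n σ (riccatiRHS n n1 N A G Q Γ B R P (σ i)) := by
  simp only [riccatiRHS_eq, map_sub, map_add, map_neg, map_mul, map_sum, relabelPlayers_hatA,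
    relabelPlayers_hatA_transpose, relabelPlayers_Qblk, relabelPlayers_Sblk,
    ← Equiv.sum_comp σ fun k => relabelPlayers n σ (Sblk n n1 N B R k) * relabelPlayers n σ (P k),
    ← Equiv.sum_comp σ fun k => relabelPlayers n σ (P k) * relabelPlayers n σ (Sblk n n1 N B R k)]

variable {τ T : ℝ} {P : Fin N → ℝ → Matrix (Fin N × Fin n) (Fin N × Fin n) ℝ}

theorem IsRiccatiSol.transpose (hQ : Q.IsSymm) (hQf : Qf.IsSymm) (hR : R.IsSymm)
    (hP : IsRiccatiSol n n1 N A G Q Qf Γ Γf B R τ T P) :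
    IsRiccatiSol n n1 N A G Q Qf Γ Γf B R τ T fun i t => (P i t)ᵀ := by
  refine ⟨fun i t ht p q => ?_, fun i => ?_⟩
  · rw [riccatiRHS_transpose hQ hR]
    exact hP.1 i t ht q p
  · beta_reduce
    rw [hP.2 i, Qblk_transpose hQf]

theorem IsRiccatiSol.relabel (σ : Equiv.Perm (Fin N))
    (hP : IsRiccatiSol n n1 N A G Q Qf Γ Γf B R τ T P) :
    IsRiccatiSol n n1 N A G Q Qf Γ Γf B R τ T fun i t => relabelPlayers n σ (P (σ i) t) := by
  refine ⟨fun i t ht p q => ?_, fun i => ?_⟩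
  · beta_reduce
    rw [riccatiRHS_relabel σ (fun k => P k t)]
    exact hP.1 (σ i) t ht (σ p.1, p.2) (σ q.1, q.2)
  · beta_reduce
    rw [hP.2 (σ i), relabelPlayers_Qblk]

theorem IsRiccatiSol.unique {P' : Fin N → ℝ → Matrix (Fin N × Fin n) (Fin N × Fin n) ℝ}
    (hP : IsRiccatiSol n n1 N A G Q Qf Γ Γf B R τ T P)
    (hP' : IsRiccatiSol n n1 N A G Q Qf Γ Γf B R τ T P') {t : ℝ} (ht : t ∈ Icc τ T) (i : Fin N) :
    P i t = P' i t := by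
  have hderiv : ∀ {S : Fin N → ℝ → Matrix (Fin N × Fin n) (Fin N × Fin n) ℝ},
      IsRiccatiSol n n1 N A G Q Qf Γ Γf B R τ T S → ∀ s ∈ Icc τ T,
        HasDerivWithinAt (fun s i => S i s)
          (fun i => riccatiRHS n n1 N A G Q Γ B R (fun k => S k s) i) (Icc τ T) s :=
    fun hS s hs => hasDerivWithinAt_pi.2 fun i => hasDerivWithinAt_pi.2 fun p =>
      hasDerivWithinAt_pi.2 fun q => hS.1 i s hs p q
  have hT : (fun i => P i T) = fun i => P' i T := funext fun i => (hP.2 i).trans (hP'.2 i).symm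
  exact congrFun (ODE_solution_unique_of_contDiff_of_mem_Icc_left contDiff_riccatiRHS
    (hderiv hP) (hderiv hP') hT ht) i

theorem IsRiccatiSol.isSymm (hQ : Q.IsSymm) (hQf : Qf.IsSymm) (hR : R.IsSymm)
    (hP : IsRiccatiSol n n1 N A G Q Qf Γ Γf B R τ T P) {t : ℝ} (ht : t ∈ Icc τ T) (i : Fin N) :
    (P i t).IsSymm :=
  (hP.transpose hQ hQf hR).unique hP ht i

theorem IsRiccatiSol.apply_perm (hP : IsRiccatiSol n n1 N A G Q Qf Γ Γf B R τ T P)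
    {t : ℝ} (ht : t ∈ Icc τ T) (σ : Equiv.Perm (Fin N)) (i : Fin N) (p q : Fin N × Fin n) :
    P (σ i) t (σ p.1, p.2) (σ q.1, q.2) = P i t p q :=
  congrFun (congrFun ((hP.relabel σ).unique hP ht i) p) q

theorem IsRiccatiSol.apply_eq_of_eq_iff (hP : IsRiccatiSol n n1 N A G Q Qf Γ Γf B R τ T P)
    {t : ℝ} (ht : t ∈ Icc τ T) {i a b a' b' : Fin N}
    (ha : a = i ↔ a' = i) (hb : b = i ↔ b' = i) (hab : a = b ↔ a' = b') (r c : Fin n) :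
    P i t (a, r) (b, c) = P i t (a', r) (b', c) := by
  obtain ⟨σ, hσi, hσa, hσb⟩ := Equiv.Perm.exists_fixing_map_pair ha hb hab
  simpa [hσi, hσa, hσb] using (hP.apply_perm ht σ i (a, r) (b, c)).symm

end Riccati

theorem riccati_P1_block_representation_four_general
    (n n1 N : ℕ) (hN : 0 < N)
    (T : ℝ)
    (A G Q Qf Γ Γf : Matrix (Fin n) (Fin n) ℝ)
    (B : Matrix (Fin n) (Fin n1) ℝ) (R : Matrix (Fin n1) (Fin n1) ℝ)
    (hQ : Q.PosSemidef) (hQf : Qf.PosSemidef) (hR : R.PosDef)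
    (P : Fin N → ℝ → Matrix (Fin N × Fin n) (Fin N × Fin n) ℝ)
    (hP : IsRiccatiSol n n1 N A G Q Qf Γ Γf B R 0 T P) :
    ∃ Pi1 Pi2 Pi3 Pi4 : ℝ → Matrix (Fin n) (Fin n) ℝ,
      (∀ t ∈ Set.Icc (0:ℝ) T,
        (Pi1 t)ᵀ = Pi1 t ∧ (Pi3 t)ᵀ = Pi3 t ∧ (Pi4 t)ᵀ = Pi4 t) ∧
      (∀ t ∈ Set.Icc (0:ℝ) T, ∀ i : Fin N, i.val = 0 →
        ∀ (j k : Fin N) (r c : Fin n),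
          (j.val = 0 → k.val = 0 → P i t (j, r) (k, c) = Pi1 t r c) ∧
          (j.val = 0 → k.val ≠ 0 → P i t (j, r) (k, c) = Pi2 t r c) ∧
          (j.val ≠ 0 → k.val = 0 → P i t (j, r) (k, c) = (Pi2 t)ᵀ r c) ∧
          (j.val ≠ 0 → k.val ≠ 0 → j = k → P i t (j, r) (k, c) = Pi3 t r c) ∧
          (j.val ≠ 0 → k.val ≠ 0 → j ≠ k → P i t (j, r) (k, c) = Pi4 t r c)) := by
  have hsymm : ∀ {t}, t ∈ Icc 0 T → ∀ i, (P i t).IsSymm :=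
    hP.isSymm (isHermitian_iff_isSymm.1 hQ.isHermitian) (isHermitian_iff_isSymm.1 hQf.isHermitian)
      (isHermitian_iff_isSymm.1 hR.isHermitian)
  obtain ⟨i₀, hi₀⟩ : ∃ i₀ : Fin N, i₀.val = 0 := ⟨⟨0, hN⟩, rfl⟩
  -- for `N ≥ 3` these are two distinct players other than `i₀`; `min` only keeps them in range
  obtain ⟨j₁, hj₁⟩ : ∃ j₁ : Fin N, j₁.val = min 1 (N - 1) := ⟨⟨min 1 (N - 1), by omega⟩, rfl⟩
  obtain ⟨j₂, hj₂⟩ : ∃ j₂ : Fin N, j₂.val = min 2 (N - 1) := ⟨⟨min 2 (N - 1), by omega⟩, rfl⟩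
  refine ⟨fun t => of fun r c => P i₀ t (i₀, r) (i₀, c),
    fun t => of fun r c => P i₀ t (i₀, r) (j₁, c),
    fun t => of fun r c => P i₀ t (j₁, r) (j₁, c),
    fun t => of fun r c => P i₀ t (j₁, r) (j₂, c),
    fun t ht => ⟨?_, ?_, ?_⟩, fun t ht i hi j k r c => ?_⟩
  · ext r c
    exact (hsymm ht i₀).apply _ _
  · ext r c
    exact (hsymm ht i₀).apply _ _
  · ext r c
    exact ((hsymm ht i₀).apply _ _).symm.trans
      (hP.apply_eq_of_eq_iff ht (by grind [Fin.ext_iff]) (by grind [Fin.ext_iff])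
        (by grind [Fin.ext_iff]) r c)
  · obtain rfl : i = i₀ := Fin.ext (hi.trans hi₀.symm)
    refine ⟨fun hj hk => ?_, fun hj hk => ?_, fun hj hk => ((hsymm ht i).apply _ _).symm.trans ?_,
      fun hj hk hjk => ?_, fun hj hk hjk => ?_⟩ <;>
    exact hP.apply_eq_of_eq_iff ht (by grind [Fin.ext_iff]) (by grind [Fin.ext_iff])
      (by grind [Fin.ext_iff]) _ _

/-- If the `N`-player Riccati system has a solution on `[0, T]`, then
`P_1(t)` (the component with player index `i` satisfying `i.val = 0`), viewed as an
`N×N` array of `n×n` blocks, has the representation with `(1,1)` block `Π_1(t)`,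
`(1,j)` blocks `Π_2(t)` for `j ≥ 2`, `(j,1)` blocks `Π_2(t)ᵀ`, diagonal blocks `Π_3(t)`
for `j ≥ 2`, and off-diagonal blocks `Π_4(t)` for `2 ≤ j ≠ k`, where `Π_1, Π_3, Π_4`
are symmetric. -/
theorem riccati_P1_block_representation_four
    (n n1 N : ℕ) (hn : 0 < n) (hn1 : 0 < n1) (hN : 0 < N)
    (T : ℝ) (hT : 0 < T)
    (A G Q Qf Γ Γf : Matrix (Fin n) (Fin n) ℝ)
    (B : Matrix (Fin n) (Fin n1) ℝ) (R : Matrix (Fin n1) (Fin n1) ℝ)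
    (hQ : Q.PosSemidef) (hQf : Qf.PosSemidef) (hR : R.PosDef)
    (P : Fin N → ℝ → Matrix (Fin N × Fin n) (Fin N × Fin n) ℝ)
    (hP : IsRiccatiSol n n1 N A G Q Qf Γ Γf B R 0 T P) :
    ∃ Pi1 Pi2 Pi3 Pi4 : ℝ → Matrix (Fin n) (Fin n) ℝ,
      (∀ t ∈ Set.Icc (0:ℝ) T,
        (Pi1 t)ᵀ = Pi1 t ∧ (Pi3 t)ᵀ = Pi3 t ∧ (Pi4 t)ᵀ = Pi4 t) ∧
      (∀ t ∈ Set.Icc (0:ℝ) T, ∀ i : Fin N, i.val = 0 →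
        ∀ (j k : Fin N) (r c : Fin n),
          (j.val = 0 → k.val = 0 → P i t (j, r) (k, c) = Pi1 t r c) ∧
          (j.val = 0 → k.val ≠ 0 → P i t (j, r) (k, c) = Pi2 t r c) ∧
          (j.val ≠ 0 → k.val = 0 → P i t (j, r) (k, c) = (Pi2 t)ᵀ r c) ∧
          (j.val ≠ 0 → k.val ≠ 0 → j = k → P i t (j, r) (k, c) = Pi3 t r c) ∧
          (j.val ≠ 0 → k.val ≠ 0 → j ≠ k → P i t (j, r) (k, c) = Pi4 t r c)) :=
  riccati_P1_block_representation_four_general n n1 N hN T A G Q Qf Γ Γf B R hQ hQf hR P hP
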